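/- arXiv:1405.5712 — 15 statements merged into one kernel-verified Lean document; each statement's English description precedes it below -/
import Mathlib

section
/- Let S be a finite semigroup such that there exists some semigroup isomorphism between S and Σ(C(S)). If the map s ↦ s̄ is injective, then it satisfies st‾ = s̄ ∘ t̄ for all s, t ∈ S, and hence is itself an isomorphism from S onto Σ(C(S)). -/
/-- The Cayley automaton state map: `cayley s` sends the word
`α₁α₂⋯αₙ` to `(sα₁)(sα₁α₂)⋯(sα₁α₂⋯αₙ)`. -/
def cayley {S : Type*} [Mul S] (s : S) : List S → List S
  | [] => []
  | a :: α => (s * a) :: cayley (s * a) α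

/-- `S` is self-automaton if `s ↦ s̄` is injective and a homomorphism. -/
def SelfAutomaton (S : Type*) [Mul S] : Prop :=
  Function.Injective (cayley (S := S)) ∧
    ∀ s t : S, cayley (s * t) = cayley s ∘ cayley t

/-- `S` is self-dual if it admits an anti-automorphism. -/
def SelfDual (S : Type*) [Mul S] : Prop :=
  ∃ φ : S ≃ S, ∀ x y : S, φ (x * y) = φ y * φ x

/-- `Σ(C(S))`: the subsemigroup of maps on words, under composition,
generated by the Cayley automaton state maps. -/
def SigmaC (S : Type*) [Mul S] : Subsemigroup (Function.End (List S)) :=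
  Subsemigroup.closure (Set.range (cayley : S → Function.End (List S)))

/-- Auxiliary: `cayley` as a map into `Function.End (List S)`. -/
def cayleyEnd (S : Type*) [Mul S] : S → Function.End (List S) := fun s => cayley s

lemma sigmaC_eq_closure (S : Type*) [Mul S] :
    SigmaC S = Subsemigroup.closure (Set.range (cayleyEnd S)) := rfl

theorem cayley_injective_isomorphism {S : Type*} [Semigroup S] [Finite S]
    (hiso : Nonempty (S ≃* ↥(SigmaC S)))
    (hinj : Function.Injective (cayley (S := S))) :
    (∀ s t : S, cayley (s * t) = cayley s ∘ cayley t) ∧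
      ∃ e : S ≃* ↥(SigmaC S), ∀ s : S, (↑(e s) : Function.End (List S)) = cayley s := by
  obtain ⟨φ⟩ := hiso
  have hfin : Finite ↥(SigmaC S) := Finite.of_equiv S φ.toEquiv
  have hfin' : (SigmaC S : Set (Function.End (List S))).Finite := by
    have : Finite ((SigmaC S : Set (Function.End (List S))) : Type _) := hfin
    exact Set.toFinite _
  have hinj' : Function.Injective (cayleyEnd S) := fun a b h => hinj h
  have hsub : Set.range (cayleyEnd S) ⊆ (SigmaC S : Set (Function.End (List S))) := by
    rw [sigmaC_eq_closure]
    exact Subsemigroup.subset_closure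
  have hrange : Set.range (cayleyEnd S) = (SigmaC S : Set (Function.End (List S))) := by
    apply Set.eq_of_subset_of_ncard_le hsub _ hfin'
    have e1 : (Set.range (cayleyEnd S)).ncard = Nat.card S :=
      by rw [← Nat.card_coe_set_eq, Nat.card_range_of_injective hinj']
    have e2 : (SigmaC S : Set (Function.End (List S))).ncard = Nat.card ↥(SigmaC S) :=
      (Nat.card_coe_set_eq _).symm
    rw [e1, e2]
    exact le_of_eq (Nat.card_congr φ.toEquiv).symm
  have hmemr : ∀ s : S, cayleyEnd S s ∈ Set.range (cayleyEnd S) := fun s => ⟨s, rfl⟩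
  have key : ∀ s t : S, cayley (s * t) = cayley s ∘ cayley t := by
    intro s t
    have hmem : (cayleyEnd S s * cayleyEnd S t) ∈ (SigmaC S : Set (Function.End (List S))) :=
      mul_mem (hsub (hmemr s)) (hsub (hmemr t))
    rw [← hrange] at hmem
    obtain ⟨u, hu⟩ := hmem
    have hu' : (cayley u : List S → List S) = cayley s ∘ cayley t := hu
    have h1 : ∀ a : S, (s * t) * a = u * a := by
      intro a
      have h := congrFun hu' [a]
      simp only [Function.comp_apply, cayley] at h
      have := (List.cons.injEq _ _ _ _).mp h
      rw [mul_assoc]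
      exact this.1.symm
    have h2 : cayley (s * t) = cayley u := by
      funext l
      induction l with
      | nil => rfl
      | cons a α _ => simp only [cayley, h1 a]
    rw [h2, hu']
  refine ⟨key, ?_⟩
  have hbij : Function.Bijective
      (fun s : S => (⟨cayleyEnd S s, hsub (hmemr s)⟩ : ↥(SigmaC S))) := by
    constructor
    · intro a b h
      exact hinj' (congrArg Subtype.val h)
    · rintro ⟨f, hf⟩
      have hf' : f ∈ (SigmaC S : Set (Function.End (List S))) := hf
      rw [← hrange] at hf'
      obtain ⟨u, hu⟩ := hf'
      exact ⟨u, Subtype.ext hu⟩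
  refine ⟨⟨Equiv.ofBijective _ hbij, ?_⟩, fun s => rfl⟩
  intro s t
  exact Subtype.ext (key s t)
end

section
/- Let B be a finite band. Then the map b ↦ b̄ to Cayley automaton state maps is a homomorphism: st‾ = s̄ ∘ t̄ for all s, t ∈ B. -/
theorem band_cayley_hom {B : Type*} [Semigroup B] [Finite B]
    (hband : ∀ b : B, b * b = b) (s t : B) :
    cayley (s * t) = cayley s ∘ cayley t := by
  have key : ∀ (α : List B) (s t : B), cayley (s * t) α = cayley s (cayley t α) := by
    intro α
    induction α with
    | nil => intro s t; simp [cayley]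
    | cons a α ih =>
        intro s t
        simp only [cayley, mul_assoc, List.cons.injEq, true_and]
        have := ih (s * (t * a)) (t * a)
        rw [mul_assoc, hband] at this
        exact this
  funext α
  exact key α s t
end

section
/- A finite band is self-automaton if and only if its left-regular representation is faithful. -/
lemma cayley_mul_apply {B : Type*} [Semigroup B] (hband : ∀ b : B, b * b = b) :
    ∀ (α : List B) (u v : B), cayley (u * v) α = cayley u (cayley v α)
  | [], _, _ => rfl
  | a :: α, u, v => by
    simp only [cayley]
    refine List.cons_eq_cons.mpr ⟨(mul_assoc u v a).symm ▸ rfl, ?_⟩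
    have key : (u * v * a) * (v * a) = u * v * a := by
      calc (u * v * a) * (v * a) = u * ((v * a) * (v * a)) := by
            simp only [mul_assoc]
        _ = u * (v * a) := by rw [hband]
        _ = u * v * a := (mul_assoc u v a).symm
    rw [← mul_assoc, ← cayley_mul_apply hband α, key]

theorem band_selfAutomaton_iff_faithful {B : Type*} [Semigroup B] [Finite B]
    (hband : ∀ b : B, b * b = b) :
    SelfAutomaton B ↔ ∀ s t : B, (∀ a : B, s * a = t * a) → s = t := by
  constructor
  · rintro ⟨hinj, -⟩ s t h
    apply hinj
    funext α
    cases α with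
    | nil => rfl
    | cons a α => simp only [cayley, h a]
  · intro hf
    refine ⟨?_, ?_⟩
    · intro s t h
      apply hf
      intro a
      have := congrFun h [a]
      simpa [cayley] using this
    · intro s t
      funext α
      exact cayley_mul_apply hband α s t
end

section
/- Let S be a finite semigroup with relative left and right identities, i.e., for every s ∈ S there exist e, f ∈ S with se = s and fs = s. Then S is self-automaton if and only if S is a band whose left-regular representation is faithful. -/
private lemma cayley_eq_of {S : Type*} [Mul S] :
    ∀ (α : List S) (s t : S), (∀ a, s * a = t * a) → cayley s α = cayley t α
  | [], _, _, _ => rfl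
  | a :: α, s, t, h => by rw [cayley, cayley, h a]

private lemma cayley_comp {S : Type*} [Semigroup S] (hb : ∀ a : S, a * a = a) :
    ∀ (α : List S) (s t : S), cayley s (cayley t α) = cayley (s * t) α
  | [], _, _ => rfl
  | a :: α, s, t => by
    show (s * (t * a)) :: cayley (s * (t * a)) (cayley (t * a) α)
        = (s * t * a) :: cayley (s * t * a) α
    rw [cayley_comp hb α (s * (t * a)) (t * a)]
    have h1 : s * (t * a) * (t * a) = s * (t * a) := by
      rw [mul_assoc, hb]
    rw [h1, mul_assoc]

theorem selfAutomaton_iff_band_of_relative_identities {S : Type*} [Semigroup S]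
    [Finite S] (hrel : ∀ s : S, ∃ e f : S, s * e = s ∧ f * s = s) :
    SelfAutomaton S ↔
      ((∀ a : S, a * a = a) ∧ ∀ s t : S, (∀ a : S, s * a = t * a) → s = t) := by
  constructor
  · rintro ⟨hinj, hhom⟩
    have hfaith : ∀ s t : S, (∀ a : S, s * a = t * a) → s = t := by
      intro s t h
      exact hinj (funext fun α => cayley_eq_of α s t h)
    refine ⟨fun u => ?_, hfaith⟩
    obtain ⟨e, f, he, hf⟩ := hrel u
    refine hfaith (u * u) u (fun b => ?_)
    have h2 := congrFun (hhom f u) [e, b]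
    simp only [cayley, Function.comp, hf, he] at h2
    have := (List.cons.injEq _ _ _ _ ▸ h2).2
    have h3 : u * b = u * (u * b) := by
      simpa using congrArg List.head? this
    rw [mul_assoc]
    exact h3.symm
  · rintro ⟨hb, hfaith⟩
    constructor
    · intro s t h
      refine hfaith s t (fun a => ?_)
      have := congrFun h [a]
      simpa [cayley] using this
    · intro s t
      funext α
      exact (cayley_comp hb α s t).symm
end

section
/- A finite monoid is self-automaton if and only if it is a band (every element is idempotent). -/
theorem monoid_selfAutomaton_iff_band {M : Type*} [Monoid M] [Finite M] :
    SelfAutomaton M ↔ ∀ a : M, a * a = a := by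
  constructor
  · rintro ⟨-, hmul⟩ a
    have h := congrFun (hmul 1 a) [1, 1]
    simp [cayley] at h
    exact h.symm
  · intro h
    have key : ∀ (α : List M) (w v : M),
        cayley (w * v) (cayley v α) = cayley (w * v) α := by
      intro α
      induction α with
      | nil => intro w v; rfl
      | cons a α ih =>
        intro w v
        simp only [cayley]
        have h1 : w * v * (v * a) = w * v * a := by
          rw [← mul_assoc, mul_assoc w v v, h]
        rw [h1]
        refine congrArg _ ?_
        have := ih w (v * a)
        rwa [← mul_assoc] at this
    constructor
    · intro s t hst
      have h1 := congrFun hst [1]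
      simp [cayley] at h1
      exact h1
    · intro s t
      funext α
      cases α with
      | nil => rfl
      | cons a α =>
        simp only [Function.comp_apply, cayley]
        rw [mul_assoc]
        exact congrArg _ (key α s (t * a)).symm
end

section
/- Let S be a finite regular semigroup (for every a ∈ S there exists x ∈ S with axa = a). Then S is self-automaton if and only if S is a band whose left-regular representation is faithful. -/
private lemma cayley_congr {S : Type*} [Mul S] {s t : S}
    (h : ∀ a, s * a = t * a) : ∀ α, cayley s α = cayley t α := by
  intro α
  cases α with
  | nil => rfl
  | cons a β => simp [cayley, h a]

private lemma cayley_absorb {S : Type*} [Semigroup S] (hb : ∀ a : S, a * a = a)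
    (s : S) : ∀ (α : List S) (v : S),
      cayley (s * v) (cayley v α) = cayley (s * v) α := by
  intro α
  induction α with
  | nil => intro v; rfl
  | cons a β ih =>
    intro v
    have h1 : s * v * (v * a) = s * (v * a) := by
      rw [mul_assoc, ← mul_assoc v v a, hb v]
    show (s * v * (v * a)) :: cayley (s * v * (v * a)) (cayley (v * a) β)
        = (s * v * a) :: cayley (s * v * a) β
    rw [h1, mul_assoc s v a, ih (v * a)]

theorem regular_selfAutomaton_iff_band_faithful {S : Type*} [Semigroup S]
    [Finite S] (hreg : ∀ a : S, ∃ x : S, a * x * a = a) :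
    SelfAutomaton S ↔
      ((∀ a : S, a * a = a) ∧ ∀ s t : S, (∀ a : S, s * a = t * a) → s = t) := by
  constructor
  · rintro ⟨hinj, hhom⟩
    have hfaith : ∀ s t : S, (∀ a : S, s * a = t * a) → s = t := by
      intro s t h
      exact hinj (funext (cayley_congr h))
    refine ⟨?_, hfaith⟩
    have key : ∀ s t α : S, s * t * α * (t * α) = s * t * α := by
      intro s t α
      apply hfaith
      intro β
      have h := congrFun (hhom s t) [α, β]
      simp only [cayley, Function.comp_apply, List.cons.injEq, and_true] at h
      rw [mul_assoc (s * t * α) (t * α) β, h.2, ← mul_assoc s t α]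
    have idem2 : ∀ a α : S, a * α * (a * α) = a * α := by
      intro a α
      obtain ⟨x, hx⟩ := hreg a
      have := key (a * x) a α
      rwa [hx] at this
    intro a
    obtain ⟨x, hx⟩ := hreg a
    have := idem2 (a * x) a
    rwa [hx] at this
  · rintro ⟨hb, hfaith⟩
    constructor
    · intro s t h
      apply hfaith
      intro a
      have := congrFun h [a]
      simpa [cayley] using this
    · intro s t
      funext α
      cases α with
      | nil => rfl
      | cons a β =>
        show (s * t * a) :: cayley (s * t * a) β
            = cayley s ((t * a) :: cayley (t * a) β)
        show (s * t * a) :: cayley (s * t * a) β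
            = (s * (t * a)) :: cayley (s * (t * a)) (cayley (t * a) β)
        rw [cayley_absorb hb s β (t * a), mul_assoc]
end

section
/- Let S be a finite semigroup such that S² = {xy : x, y ∈ S} is a band, i.e., every product of two elements of S is idempotent. Then the map s ↦ s̄ is a homomorphism: st‾ = s̄ ∘ t̄ for all s, t ∈ S. -/
lemma cayley_aux {S : Type*} [Semigroup S]
    (h : ∀ x y : S, (x * y) * (x * y) = x * y) :
    ∀ (α : List S) (s t : S), cayley (s * t) α = cayley s (cayley t α)
  | [], _, _ => rfl
  | a :: α, s, t => by
    simp only [cayley]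
    have e : s * (t * a) * (t * a) = s * (t * a) := by
      rw [mul_assoc, h]
    have ih := cayley_aux h α (s * (t * a)) (t * a)
    rw [e] at ih
    rw [mul_assoc, ih]

theorem cayley_hom_of_sq_band {S : Type*} [Semigroup S] [Finite S]
    (h : ∀ x y : S, (x * y) * (x * y) = x * y) (s t : S) :
    cayley (s * t) = cayley s ∘ cayley t := by
  funext α
  exact cayley_aux h α s t
end

section
/- Let S be a finite self-automaton semigroup and let a, x ∈ S. If xa = a, then a² = a. -/
theorem idempotent_of_left_stabilized {S : Type*} [Semigroup S] [Finite S]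
    (hsa : SelfAutomaton S) (a x : S) (h : x * a = a) : a * a = a := by
  obtain ⟨hinj, hhom⟩ := hsa
  -- key identity from applying the homomorphism property to two-letter words
  have key : ∀ s t b c : S, s * t * b * c = (s * (t * b)) * ((t * b) * c) := by
    intro s t b c
    have := congrFun (hhom s t) [b, c]
    simp only [cayley, Function.comp_apply, List.cons.injEq] at this
    exact this.2.1
  -- from x * a = a deduce a * c = a * a * c for all c
  have habs : ∀ c : S, a * c = a * a * c := by
    intro c
    have := key x x a c
    rw [mul_assoc x x a, h, h] at this
    rw [this, mul_assoc]
  -- hence cayley a = cayley (a * a)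
  have hcay : cayley (a * a) = cayley a := by
    funext l
    cases l with
    | nil => rfl
    | cons b α =>
      simp only [cayley]
      rw [← habs b]
  have := hinj hcay
  exact this.symm ▸ rfl
end

section
/- Let S be a finite self-automaton semigroup and let a ∈ S with a² ≠ a. Then the Green's L-class of a is trivial: for every y ∈ S, if (y = a or ua = y for some u ∈ S) and (a = y or vy = a for some v ∈ S), then y = a. -/
theorem lClass_trivial_of_not_idempotent {S : Type*} [Semigroup S] [Finite S]
    (hsa : SelfAutomaton S) (a : S) (ha : a * a ≠ a) :
    ∀ y : S, ((y = a ∨ ∃ u : S, u * a = y) ∧ (a = y ∨ ∃ v : S, v * y = a)) → y = a := by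
  obtain ⟨hinj, hhom⟩ := hsa
  -- left reductivity
  have lr : ∀ p q : S, (∀ x : S, p * x = q * x) → p = q := by
    intro p q h
    apply hinj
    funext α
    cases α with
    | nil => rfl
    | cons x β => simp [cayley, h x]
  -- the fundamental relation from the homomorphism property on 2-letter words
  have key : ∀ s t x z : S, s * t * x * z = s * (t * x) * (t * x * z) := by
    intro s t x z
    have h := congrFun (hhom s t) [x, z]
    simp [cayley, Function.comp] at h
    exact h.2
  rintro y ⟨hy1, hy2⟩
  rcases hy1 with rfl | ⟨u, hu⟩
  · rfl
  rcases hy2 with h | ⟨v, hv⟩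
  · exact h.symm
  exfalso
  -- (1) : a * z = a * y * z for all z
  have h1 : ∀ z : S, a * z = a * y * z := by
    intro z
    have := key v u a z
    rw [mul_assoc v u a, hu, hv] at this
    rw [mul_assoc]; exact this
  -- (2) : y * z = y * a * z for all z
  have h2 : ∀ z : S, y * z = y * a * z := by
    intro z
    have := key u v y z
    rw [mul_assoc u v y, hv, hu] at this
    rw [mul_assoc]; exact this
  have hay : a = a * y := lr a (a * y) h1
  have hya : y = y * a := lr y (y * a) h2
  apply ha
  calc a * a = (a * y) * a := by rw [← hay]
    _ = a * (y * a) := mul_assoc a y a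
    _ = a * y := by rw [← hya]
    _ = a := hay.symm
end

section
/- Let S be a finite self-dual self-automaton semigroup and let a, x ∈ S. If ax = a, then a² = a. -/
theorem idempotent_of_right_stabilized {S : Type*} [Semigroup S] [Finite S]
    (hd : SelfDual S) (hsa : SelfAutomaton S) (a x : S) (h : a * x = a) :
    a * a = a := by
  obtain ⟨φ, hφ⟩ := hd
  obtain ⟨hinj, hhom⟩ := hsa
  -- key identity from the homomorphism property evaluated on two-letter words
  have key : ∀ s t b c : S, (s * (t * b)) * ((t * b) * c) = s * t * b * c := by
    intro s t b c
    have := congrFun (hhom s t) [b, c]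
    simp only [cayley, Function.comp_apply, List.cons.injEq] at this
    rw [this.2.1, ← this.1]
  set a' := φ a with ha'
  set x' := φ x with hx'
  have h' : x' * a' = a' := by
    rw [ha', hx', ← hφ, h]
  -- a' * (a' * c) = a' * c for all c
  have habs : ∀ c : S, a' * (a' * c) = a' * c := by
    intro c
    have := key x' x' a' c
    rw [h', h'] at this
    rw [this, mul_assoc x' x' a', h', h']
  have hc : cayley (a' * a') = cayley a' := by
    funext ls
    cases ls with
    | nil => rfl
    | cons b α =>
      have hb : a' * a' * b = a' * b := by rw [mul_assoc]; exact habs b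
      simp [cayley, hb]
  have ha2 : a' * a' = a' := hinj hc
  have : φ (a * a) = φ a := by rw [hφ]; exact ha2
  exact φ.injective this
end

section
/- Let S be a finite self-dual self-automaton semigroup and let z = xy where x or y is a regular element of S (a is regular if a = apa for some p ∈ S). Then z² = z. -/
lemma cayley_key {S : Type*} [Semigroup S] (hsa : SelfAutomaton S)
    (s t a b : S) : s * (t * a) * b = s * (t * a) * (t * a) * b := by
  have h := congrFun (hsa.2 s t) [a, b]
  simp only [cayley, Function.comp, List.cons.injEq] at h
  have h2 := h.2.1
  calc s * (t * a) * b = s * t * a * b := by rw [mul_assoc s t a]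
    _ = s * (t * a) * (t * a * b) := h2
    _ = s * (t * a) * (t * a) * b := by simp only [mul_assoc]

lemma faithL {S : Type*} [Mul S] (hsa : SelfAutomaton S) {s t : S}
    (h : ∀ a, s * a = t * a) : s = t := by
  apply hsa.1
  funext α
  cases α with
  | nil => rfl
  | cons a α =>
    show (s * a) :: cayley (s * a) α = (t * a) :: cayley (t * a) α
    rw [h a]

lemma faithR {S : Type*} [Mul S] (hd : SelfDual S) (hsa : SelfAutomaton S) {s t : S}
    (h : ∀ a, a * s = a * t) : s = t := by
  obtain ⟨φ, hφ⟩ := hd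
  have key : ∀ b, φ s * b = φ t * b := by
    intro b
    have := congrArg φ (h (φ.symm b))
    rw [hφ, hφ, Equiv.apply_symm_apply] at this
    exact this
  exact φ.injective (faithL hsa key)

theorem idempotent_of_regular_factor {S : Type*} [Semigroup S] [Finite S]
    (hd : SelfDual S) (hsa : SelfAutomaton S) (x y z : S) (hz : z = x * y)
    (hreg : (∃ p : S, x * p * x = x) ∨ (∃ p : S, y * p * y = y)) :
    z * z = z := by
  subst hz
  rcases hreg with ⟨p, hp⟩ | ⟨q, hq⟩
  · refine faithL hsa fun b => ?_
    have key : x * y * b = x * y * (x * y) * b := by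
      calc x * y * b = x * p * x * y * b := by rw [hp]
        _ = x * p * (x * y) * b := by rw [mul_assoc (x * p) x y]
        _ = x * p * (x * y) * (x * y) * b := cayley_key hsa (x * p) x y b
        _ = x * p * x * y * (x * y) * b := by rw [← mul_assoc (x * p) x y]
        _ = x * y * (x * y) * b := by rw [hp]
    exact key.symm
  · refine faithR hd hsa fun a => ?_
    have hzz : (x * y) * (q * y) = x * y := by
      rw [mul_assoc x y (q * y), ← mul_assoc y q y, hq]
    calc a * (x * y * (x * y)) = a * (x * y) * (x * y) := (mul_assoc a (x*y) (x*y)).symm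
      _ = a * (x * y) * ((x * y) * (q * y)) := by rw [hzz]
      _ = a * (x * y) * (x * y) * (q * y) := by rw [mul_assoc (a * (x * y))]
      _ = a * (x * y) * (q * y) := (cayley_key hsa a x y (q * y)).symm
      _ = a * ((x * y) * (q * y)) := by rw [mul_assoc]
      _ = a * (x * y) := by rw [hzz]
end

section
/- Let S be a finite self-automaton and self-dual semigroup such that S² = S (every element of S is a product of two elements of S). Then S is a band: every element of S is idempotent. -/
/-- If `s` and `t` have the same left-multiplication map, their Cayley maps agree. -/
lemma cayley_ext {S : Type*} [Mul S] {s t : S} (h : ∀ x, s * x = t * x) :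
    cayley s = cayley t := by
  funext l
  cases l with
  | nil => rfl
  | cons a α => simp [cayley, h a]

theorem band_of_selfAutomaton_selfDual_sq {S : Type*} [Semigroup S] [Finite S]
    (hsa : SelfAutomaton S) (hd : SelfDual S)
    (hS2 : ∀ z : S, ∃ x y : S, z = x * y) :
    ∀ a : S, a * a = a := by
  obtain ⟨hinj, hhom⟩ := hsa
  obtain ⟨φ, hφ⟩ := hd
  -- left reductivity
  have lr : ∀ s t : S, (∀ x, s * x = t * x) → s = t := fun s t h => hinj (cayley_ext h)
  -- key identity from two-letter words
  have key : ∀ s t a b : S, s * t * a * b = s * t * a * t * a * b := by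
    intro s t a b
    have h := congrFun (hhom s t) [a, b]
    simp only [cayley, Function.comp_apply, List.cons.injEq] at h
    rw [h.2.1]
    ac_rfl
  have h1 : ∀ s t a : S, s * t * a = s * t * a * t * a :=
    fun s t a => lr _ _ (fun b => key s t a b)
  -- dualize via the anti-automorphism
  have h2 : ∀ u v w : S, u * v * w = u * v * u * v * w := by
    intro u v w
    have h := congrArg φ (h1 (φ.symm w) (φ.symm v) (φ.symm u))
    simp only [hφ, Equiv.apply_symm_apply] at h
    simp only [mul_assoc] at h ⊢
    exact h
  have h3 : ∀ u v : S, u * v = u * v * u * v :=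
    fun u v => lr _ _ (fun w => h2 u v w)
  intro a
  obtain ⟨x, y, hxy⟩ := hS2 a
  calc a * a = x * y * x * y := by rw [hxy]; ac_rfl
    _ = x * y := (h3 x y).symm
    _ = a := hxy.symm
end

section
/- Let S be a finite semigroup such that the map s ↦ s̄ is a homomorphism (st‾ = s̄ ∘ t̄ for all s, t ∈ S), and let f : S → T be a surjective semigroup homomorphism onto a finite semigroup T. Then the map t ↦ t̄ (for the Cayley automaton of T) is also a homomorphism: for all t₁, t₂ ∈ T, t₁t₂‾ = t̄₁ ∘ t̄₂. -/
theorem cayley_hom_of_epimorphism {S T : Type*} [Semigroup S] [Semigroup T]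
    [Finite S] [Finite T]
    (hS : ∀ s t : S, cayley (s * t) = cayley s ∘ cayley t)
    (f : S →ₙ* T) (hf : Function.Surjective f) (t₁ t₂ : T) :
    cayley (t₁ * t₂) = cayley t₁ ∘ cayley t₂ := by
  have map_cayley : ∀ (s : S) (β : List S),
      List.map f (cayley s β) = cayley (f s) (List.map f β) := by
    intro s β
    induction β generalizing s with
    | nil => rfl
    | cons a β ih => simp [cayley, map_mul, ih]
  funext α
  obtain ⟨s₁, rfl⟩ := hf t₁
  obtain ⟨s₂, rfl⟩ := hf t₂
  obtain ⟨β, rfl⟩ := (List.map_surjective_iff.2 hf) α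
  calc cayley (f s₁ * f s₂) (List.map f β)
      = cayley (f (s₁ * s₂)) (List.map f β) := by rw [map_mul]
    _ = List.map f (cayley (s₁ * s₂) β) := (map_cayley _ _).symm
    _ = List.map f (cayley s₁ (cayley s₂ β)) := by rw [hS]; rfl
    _ = cayley (f s₁) (List.map f (cayley s₂ β)) := map_cayley _ _
    _ = cayley (f s₁) (cayley (f s₂) (List.map f β)) := by rw [map_cayley]
end

section
/- Let S be a finite semigroup such that the map s ↦ s̄ is a homomorphism (st‾ = s̄ ∘ t̄ for all s, t ∈ S). Then Σ(C(S)) is isomorphic to the image of the left-regular representation of S, i.e., to the subsemigroup, under composition, of maps S → S consisting of the maps λ_a : x ↦ ax for a ∈ S. -/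
/-- The image of the left-regular representation of `S`, as a subsemigroup
of `Function.End S` under composition: the maps `λ_a : x ↦ a * x` for `a ∈ S`. -/
def LeftRegSub (S : Type*) [Semigroup S] : Subsemigroup (Function.End S) where
  carrier := Set.range (fun a : S => (fun x => a * x : Function.End S))
  mul_mem' := by
    rintro _ _ ⟨a, rfl⟩ ⟨b, rfl⟩
    exact ⟨a * b, funext fun x => mul_assoc a b x⟩

/-- If `s` and `t` act the same on the left, their Cayley maps agree. -/
lemma cayley_eq_of_lmul_eq {S : Type*} [Mul S] {s t : S}
    (hst : ∀ x : S, s * x = t * x) : cayley s = cayley t := by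
  funext l
  cases l with
  | nil => rfl
  | cons a α =>
    show (s * a) :: cayley (s * a) α = (t * a) :: cayley (t * a) α
    rw [hst a]

/-- Conversely, equal Cayley maps give equal left actions. -/
lemma lmul_eq_of_cayley_eq {S : Type*} [Mul S] {s t : S}
    (hst : cayley s = cayley t) : ∀ x : S, s * x = t * x := by
  intro x
  have := congrFun hst [x]
  simpa [cayley] using this

theorem sigmaC_iso_leftRegular {S : Type*} [Semigroup S] [Finite S]
    (h : ∀ s t : S, cayley (s * t) = cayley s ∘ cayley t) :
    Nonempty (↥(SigmaC S) ≃* ↥(LeftRegSub S)) := by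
  classical
  -- the range of `cayley` is a subsemigroup
  let R : Subsemigroup (Function.End (List S)) :=
    { carrier := Set.range (cayley : S → Function.End (List S))
      mul_mem' := by
        rintro _ _ ⟨a, rfl⟩ ⟨b, rfl⟩
        exact ⟨a * b, funext fun l => congrFun (h a b) l⟩ }
  have hSR : SigmaC S = R := Subsemigroup.closure_eq R
  have hmem : ∀ f : Function.End (List S), f ∈ SigmaC S →
      ∃ s : S, cayley s = f := by
    intro f hf
    rw [hSR] at hf
    exact hf
  -- pick representatives
  have lam_mem : ∀ s : S, (fun x => s * x : Function.End S) ∈ LeftRegSub S :=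
    fun s => ⟨s, rfl⟩
  have cay_mem : ∀ s : S, (cayley s : Function.End (List S)) ∈ SigmaC S := by
    intro s
    exact Subsemigroup.subset_closure ⟨s, rfl⟩
  let pick : ↥(SigmaC S) → S := fun f => (hmem f.1 f.2).choose
  have pick_spec : ∀ f : ↥(SigmaC S), cayley (pick f) = f.1 :=
    fun f => (hmem f.1 f.2).choose_spec
  let pick' : ↥(LeftRegSub S) → S := fun g => g.2.choose
  have pick'_spec : ∀ g : ↥(LeftRegSub S),
      (fun x => pick' g * x : Function.End S) = g.1 :=
    fun g => g.2.choose_spec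
  refine ⟨{
    toFun := fun f => ⟨fun x => pick f * x, lam_mem _⟩
    invFun := fun g => ⟨cayley (pick' g), cay_mem _⟩
    left_inv := ?_
    right_inv := ?_
    map_mul' := ?_ }⟩
  · intro f
    apply Subtype.ext
    have h1 : (fun x => pick' ⟨fun x => pick f * x, lam_mem _⟩ * x : Function.End S)
        = (fun x => pick f * x) := pick'_spec _
    have h2 : ∀ x : S, pick' ⟨fun x => pick f * x, lam_mem _⟩ * x = pick f * x :=
      fun x => congrFun h1 x
    calc (cayley (pick' ⟨fun x => pick f * x, lam_mem _⟩) : Function.End (List S))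
        = cayley (pick f) := cayley_eq_of_lmul_eq h2
      _ = (show List S → List S from f.1) := pick_spec f
  · intro g
    apply Subtype.ext
    have h1 : cayley (pick ⟨cayley (pick' g), cay_mem _⟩) = cayley (pick' g) :=
      pick_spec ⟨cayley (pick' g), cay_mem _⟩
    have h2 := lmul_eq_of_cayley_eq h1
    calc (fun x => pick ⟨cayley (pick' g), cay_mem _⟩ * x : Function.End S)
        = (fun x => pick' g * x) := funext h2
      _ = (show S → S from g.1) := pick'_spec g
  · intro f g
    apply Subtype.ext
    have hfg : cayley (pick (f * g)) = cayley (pick f * pick g) := by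
      rw [pick_spec (f * g), h]
      have hf := pick_spec f
      have hg := pick_spec g
      show (f * g : ↥(SigmaC S)).1 = cayley (pick f) ∘ cayley (pick g)
      rw [hf, hg]
      rfl
    have h2 := lmul_eq_of_cayley_eq hfg
    funext x
    show pick (f * g) * x = pick f * (pick g * x)
    rw [h2 x, mul_assoc]
end

section
/- Let S and T be finite nonempty semigroups. Then S and T are both self-automaton if and only if the direct product S × T (with componentwise multiplication) is self-automaton. -/
lemma cayley_map_fst {S T : Type*} [Mul S] [Mul T] :
    ∀ (l : List (S × T)) (p : S × T),
      (cayley p l).map Prod.fst = cayley p.1 (l.map Prod.fst)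
  | [], _ => rfl
  | a :: l, p => by
    simp only [cayley, List.map_cons, cayley_map_fst l (p * a)]
    rfl

lemma cayley_map_snd {S T : Type*} [Mul S] [Mul T] :
    ∀ (l : List (S × T)) (p : S × T),
      (cayley p l).map Prod.snd = cayley p.2 (l.map Prod.snd)
  | [], _ => rfl
  | a :: l, p => by
    simp only [cayley, List.map_cons, cayley_map_snd l (p * a)]
    rfl

lemma list_prod_ext {A B : Type*} :
    ∀ (l₁ l₂ : List (A × B)),
      l₁.map Prod.fst = l₂.map Prod.fst → l₁.map Prod.snd = l₂.map Prod.snd → l₁ = l₂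
  | [], [], _, _ => rfl
  | [], _ :: _, h, _ => by simp at h
  | _ :: _, [], h, _ => by simp at h
  | a :: l₁, b :: l₂, h₁, h₂ => by
    simp only [List.map_cons, List.cons.injEq] at h₁ h₂
    exact List.cons_eq_cons.2 ⟨Prod.ext h₁.1 h₂.1, list_prod_ext l₁ l₂ h₁.2 h₂.2⟩

theorem selfAutomaton_prod_iff {S T : Type*} [Semigroup S] [Semigroup T]
    [Finite S] [Finite T] [Nonempty S] [Nonempty T] :
    (SelfAutomaton S ∧ SelfAutomaton T) ↔ SelfAutomaton (S × T) := by
  obtain ⟨t₀⟩ := ‹Nonempty T›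
  obtain ⟨s₀⟩ := ‹Nonempty S›
  constructor
  · rintro ⟨⟨hSi, hSh⟩, ⟨hTi, hTh⟩⟩
    constructor
    · intro p q h
      have h1 : p.1 = q.1 := by
        apply hSi
        funext α
        have := congrFun h (α.map (fun a => (a, t₀)))
        have h1 := congrArg (List.map Prod.fst) this
        simpa [cayley_map_fst, List.map_map, Function.comp_def] using h1
      have h2 : p.2 = q.2 := by
        apply hTi
        funext α
        have := congrFun h (α.map (fun b => (s₀, b)))
        have h2 := congrArg (List.map Prod.snd) this
        simpa [cayley_map_snd, List.map_map, Function.comp_def] using h2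
      exact Prod.ext h1 h2
    · intro p q
      funext l
      apply list_prod_ext
      · rw [cayley_map_fst]
        show cayley (p.1 * q.1) _ = _
        rw [hSh p.1 q.1]
        simp [Function.comp, cayley_map_fst]
      · rw [cayley_map_snd]
        show cayley (p.2 * q.2) _ = _
        rw [hTh p.2 q.2]
        simp [Function.comp, cayley_map_snd]
  · rintro ⟨hi, hh⟩
    refine ⟨⟨?_, ?_⟩, ?_, ?_⟩
    · intro s s' h
      have : ((s, t₀) : S × T) = (s', t₀) := by
        apply hi
        funext l
        apply list_prod_ext
        · simp [cayley_map_fst, h]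
        · simp [cayley_map_snd]
      exact (Prod.ext_iff.1 this).1
    · intro s s'
      funext α
      have := congrFun (hh (s, t₀) (s', t₀)) (α.map (fun a => (a, t₀)))
      have h1 := congrArg (List.map Prod.fst) this
      simpa [cayley_map_fst, List.map_map, Function.comp_def] using h1
    · intro t t' h
      have : ((s₀, t) : S × T) = (s₀, t') := by
        apply hi
        funext l
        apply list_prod_ext
        · simp [cayley_map_fst]
        · simp [cayley_map_snd, h]
      exact (Prod.ext_iff.1 this).2
    · intro t t'
      funext α
      have := congrFun (hh (s₀, t) (s₀, t')) (α.map (fun b => (s₀, b)))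
      have h2 := congrArg (List.map Prod.snd) this
      simpa [cayley_map_snd, List.map_map, Function.comp_def] using h2
end
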